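/- For all (ω,x) ∈ Ω × J_β and all i ≥ 1, the random β-expansion digits satisfy the symmetry d_i(ω,x) = ⌊β⌋ - d_i(ω̄, ℓ(x)), where ω̄ is the bitwise complement of ω and ℓ(x) = ⌊β⌋/(β-1) - x. -/
import Mathlib


open MeasureTheory Set
open scoped Classical

/-- The interval `J_β = [0, ⌊β⌋/(β-1)]`. -/
noncomputable def Jbeta (β : ℝ) : Set ℝ := Set.Icc 0 ((⌊β⌋ : ℝ) / (β - 1))

/-- The greedy digit of `x` in base `β`: equals `j` iff `x ∈ C(j)`, where
`C(j) = [j/β, (j+1)/β)` for `j < ⌊β⌋` and `C(⌊β⌋) = [⌊β⌋/β, ⌊β⌋/(β-1)]`. -/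
noncomputable def gdigit (β x : ℝ) : ℤ := min ⌊β * x⌋ ⌊β⌋

/-- The greedy map `T_β(x) = βx - d` for `x ∈ C(d)`. -/
noncomputable def gmap (β x : ℝ) : ℝ := β * x - gdigit β x

/-- The reflection `ℓ(x) = ⌊β⌋/(β-1) - x`. -/
noncomputable def lref (β x : ℝ) : ℝ := (⌊β⌋ : ℝ) / (β - 1) - x

/-- The lazy digit: the `d` with `x ∈ Δ(d) = ℓ(C(⌊β⌋ - d))`. -/
noncomputable def ldigit (β x : ℝ) : ℤ := ⌊β⌋ - gdigit β (lref β x)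

/-- The lazy map `L_β(x) = βx - d` for `x ∈ Δ(d)`. -/
noncomputable def lmap (β x : ℝ) : ℝ := β * x - ldigit β x

/-- Membership in the union of the switch regions
`S_k = [k/β, ⌊β⌋/(β(β-1)) + (k-1)/β]`, `k = 1, …, ⌊β⌋`. -/
def inSwitch (β x : ℝ) : Prop :=
  ∃ k : ℤ, 1 ≤ k ∧ k ≤ ⌊β⌋ ∧ (k : ℝ) / β ≤ x ∧
    x ≤ (⌊β⌋ : ℝ) / (β * (β - 1)) + ((k : ℝ) - 1) / β

/-- The digit `d_1(ω,x)` assigned by the random map: the greedy digit, unless `x` is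
in a switch region and the first coin is `0` (tails), in which case the lazy digit. -/
noncomputable def rdigit (β : ℝ) (ω : ℕ → Bool) (x : ℝ) : ℤ :=
  if inSwitch β x ∧ ω 0 = false then ldigit β x else gdigit β x

/-- The random β-expansion map `K_β` on `Ω × J_β`, `Ω = {0,1}^ℕ`: the coin sequence is
shifted exactly when `x` lies in a switch region. -/
noncomputable def kmap (β : ℝ) (p : (ℕ → Bool) × ℝ) : (ℕ → Bool) × ℝ :=
  ((if inSwitch β p.2 then (fun n => p.1 (n + 1)) else p.1),
    β * p.2 - rdigit β p.1 p.2)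

/-- The digit `d_{n+1}(ω,x) = d_1(K_β^n(ω,x))` of the random β-expansion. -/
noncomputable def rdig (β : ℝ) (n : ℕ) (ω : ℕ → Bool) (x : ℝ) : ℤ :=
  rdigit β ((kmap β)^[n] (ω, x)).1 ((kmap β)^[n] (ω, x)).2

section Aux
variable {β : ℝ}

lemma lref_lref (x : ℝ) : lref β (lref β x) = x := by unfold lref; ring

lemma lref_mem (hx : x ∈ Jbeta β) : lref β x ∈ Jbeta β := by
  obtain ⟨h1, h2⟩ := hx
  exact ⟨by unfold lref; linarith, by unfold lref; linarith⟩

lemma floor_pos' (hβ : 1 < β) : (1 : ℤ) ≤ ⌊β⌋ :=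
  Int.le_floor.2 (by exact_mod_cast hβ.le)

lemma c_gt_one (hβ : 1 < β) : 1 < (⌊β⌋ : ℝ) / (β - 1) := by
  rw [lt_div_iff₀ (by linarith)]
  have := Int.sub_one_lt_floor β
  linarith

lemma beta_c (hβ : 1 < β) : β * ((⌊β⌋ : ℝ) / (β - 1)) = (⌊β⌋ : ℝ) / (β - 1) + ⌊β⌋ := by
  have h : β - 1 ≠ 0 := by intro h; exact absurd hβ (by nlinarith)
  field_simp
  ring

lemma inSwitch_iff (hβ : 1 < β) (x : ℝ) : inSwitch β x ↔
    ∃ k : ℤ, 1 ≤ k ∧ k ≤ ⌊β⌋ ∧ (k : ℝ) ≤ β * x ∧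
      β * x ≤ (⌊β⌋ : ℝ) / (β - 1) + k - 1 := by
  have hβ0 : (0 : ℝ) < β := by linarith
  have hb1 : (0 : ℝ) < β - 1 := by linarith
  have key : ∀ k : ℤ, (⌊β⌋ : ℝ) / (β * (β - 1)) + ((k : ℝ) - 1) / β =
      ((⌊β⌋ : ℝ) / (β - 1) + (k : ℝ) - 1) / β := by
    intro k; field_simp; ring
  unfold inSwitch
  constructor <;> rintro ⟨k, h1, h2, h3, h4⟩ <;> refine ⟨k, h1, h2, ?_, ?_⟩
  · rw [div_le_iff₀ hβ0] at h3; linarith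
  · rw [key, le_div_iff₀ hβ0] at h4; linarith
  · rw [div_le_iff₀ hβ0]; linarith
  · rw [key, le_div_iff₀ hβ0]; linarith

lemma inSwitch_lref (hβ : 1 < β) (h : inSwitch β x) : inSwitch β (lref β x) := by
  rw [inSwitch_iff hβ] at h ⊢
  obtain ⟨k, h1, h2, h3, h4⟩ := h
  have hbc := beta_c hβ
  have hlx : β * lref β x = (⌊β⌋ : ℝ) / (β - 1) + ⌊β⌋ - β * x := by
    unfold lref; rw [mul_sub, hbc]
  refine ⟨⌊β⌋ + 1 - k, by omega, by omega, ?_, ?_⟩ <;> rw [hlx] <;> push_cast <;> linarith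

lemma inSwitch_lref_iff (hβ : 1 < β) (x : ℝ) :
    inSwitch β (lref β x) ↔ inSwitch β x := by
  constructor
  · intro h; have := inSwitch_lref hβ h; rwa [lref_lref] at this
  · exact inSwitch_lref hβ

lemma gdigit_symm (hβ : 1 < β) {x : ℝ} (hx : x ∈ Jbeta β) (hs : ¬ inSwitch β x) :
    gdigit β x + gdigit β (lref β x) = ⌊β⌋ := by
  have hβ0 : (0 : ℝ) < β := by linarith
  have hm1 := floor_pos' hβ
  have hc1 := c_gt_one hβ
  have hbc := beta_c hβ
  set c : ℝ := (⌊β⌋ : ℝ) / (β - 1) with hc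
  obtain ⟨hx0, hxc⟩ := hx
  rw [inSwitch_iff hβ] at hs
  push_neg at hs
  have hy0 : 0 ≤ β * x := mul_nonneg hβ0.le hx0
  have hyc : β * x ≤ c + ⌊β⌋ := by
    calc β * x ≤ β * c := by nlinarith
    _ = c + ⌊β⌋ := hbc
  have hlx : β * lref β x = c + ⌊β⌋ - β * x := by
    unfold lref; rw [mul_sub, hbc]
  unfold gdigit
  rw [hlx]
  by_cases h1 : β * x < 1
  · have hf0 : ⌊β * x⌋ = 0 := Int.floor_eq_zero_iff.2 ⟨hy0, h1⟩
    have hfm : ⌊β⌋ ≤ ⌊c + ⌊β⌋ - β * x⌋ := Int.le_floor.2 (by push_cast; linarith)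
    omega
  · push_neg at h1
    have hf1 : (1 : ℤ) ≤ ⌊β * x⌋ := Int.le_floor.2 (by exact_mod_cast h1)
    set k : ℤ := min ⌊β * x⌋ ⌊β⌋ with hk
    have hk1 : 1 ≤ k := le_min hf1 hm1
    have hkm : k ≤ ⌊β⌋ := min_le_right _ _
    have hkle : (k : ℝ) ≤ β * x := by
      have h := Int.floor_le (β * x)
      have : (k : ℝ) ≤ (⌊β * x⌋ : ℝ) := by exact_mod_cast min_le_left _ _
      linarith
    have hgt : c + k - 1 < β * x := hs k hk1 hkm hkle
    by_cases h2 : k = ⌊β⌋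
    · have hz : ⌊c + ⌊β⌋ - β * x⌋ = 0 := by
        apply Int.floor_eq_zero_iff.2
        constructor
        · linarith
        · push_cast
          have : (k : ℝ) = ⌊β⌋ := by exact_mod_cast h2
          linarith
      omega
    · have hklt : k < ⌊β⌋ := lt_of_le_of_ne hkm h2
      have hfk : ⌊β * x⌋ = k := by omega
      have hylt : β * x < k + 1 := by
        have h := Int.lt_floor_add_one (β * x)
        rw [hfk] at h
        exact_mod_cast h
      have hfl : ⌊c + ⌊β⌋ - β * x⌋ = ⌊β⌋ - k := by
        rw [Int.floor_eq_iff]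
        constructor <;> push_cast <;> linarith
      omega

lemma rdigit_symm (hβ : 1 < β) {x : ℝ} (hx : x ∈ Jbeta β) (ω : ℕ → Bool) :
    rdigit β ω x = ⌊β⌋ - rdigit β (fun n => ! ω n) (lref β x) := by
  have hsw := inSwitch_lref_iff hβ x
  unfold rdigit
  by_cases hs : inSwitch β x
  · by_cases hω : ω 0 = false
    · rw [if_pos ⟨hs, hω⟩, if_neg (by simp [hω])]
      unfold ldigit; ring
    · rw [if_neg (by tauto), if_pos ⟨hsw.2 hs, by simp [Bool.not_eq_false] at hω ⊢; exact hω⟩]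
      unfold ldigit
      rw [lref_lref]
      ring
  · rw [if_neg (by tauto), if_neg (by rw [hsw]; tauto)]
    have := gdigit_symm hβ hx hs
    omega

lemma gmap_mem (hβ : 1 < β) {x : ℝ} (hx : x ∈ Jbeta β) : gmap β x ∈ Jbeta β := by
  have hβ0 : (0 : ℝ) < β := by linarith
  have hc1 := c_gt_one hβ
  have hbc := beta_c hβ
  obtain ⟨hx0, hxc⟩ := hx
  unfold gmap gdigit
  by_cases h : ⌊β * x⌋ ≤ ⌊β⌋
  · rw [min_eq_left h]
    have h1 := Int.floor_le (β * x)
    have h2 := Int.lt_floor_add_one (β * x)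
    have h3 : 0 ≤ ⌊β * x⌋ := Int.floor_nonneg.2 (mul_nonneg hβ0.le hx0)
    constructor <;> [linarith; nlinarith [Int.sub_one_lt_floor β]]
  · push_neg at h
    rw [min_eq_right h.le]
    have h1 : ((⌊β⌋ : ℝ) + 1) ≤ β * x := by
      have : (⌊β⌋ + 1 : ℝ) ≤ (⌊β * x⌋ : ℝ) := by exact_mod_cast h
      linarith [Int.floor_le (β * x)]
    constructor
    · linarith
    · nlinarith

lemma rmap_mem (hβ : 1 < β) {x : ℝ} (hx : x ∈ Jbeta β) (ω : ℕ → Bool) :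
    β * x - rdigit β ω x ∈ Jbeta β := by
  have hbc := beta_c hβ
  unfold rdigit
  split_ifs with h
  · have key : β * x - ((ldigit β x : ℤ) : ℝ) = lref β (gmap β (lref β x)) := by
      unfold ldigit lref gmap
      push_cast
      linear_combination beta_c hβ
    rw [key]
    exact lref_mem (gmap_mem hβ (lref_mem hx))
  · exact gmap_mem hβ hx

lemma kmap_symm (hβ : 1 < β) {x : ℝ} (hx : x ∈ Jbeta β) (ω : ℕ → Bool) :
    kmap β ((fun n => ! ω n), lref β x) =
      ((fun n => ! (kmap β (ω, x)).1 n), lref β (kmap β (ω, x)).2) := by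
  have hsw := inSwitch_lref_iff hβ x
  have hrd := rdigit_symm hβ hx ω
  unfold kmap
  refine Prod.ext ?_ ?_
  · simp only
    by_cases hs : inSwitch β x
    · rw [if_pos (hsw.2 hs), if_pos hs]
    · rw [if_neg (by rw [hsw]; exact hs), if_neg hs]
  · simp only
    have h : ((rdigit β (fun n => ! ω n) (lref β x) : ℤ) : ℝ) = (⌊β⌋ : ℝ) - rdigit β ω x := by
      push_cast [hrd]; ring
    rw [h]
    unfold lref
    linear_combination beta_c hβ

lemma iter_symm (hβ : 1 < β) : ∀ (i : ℕ) (ω : ℕ → Bool) (x : ℝ), x ∈ Jbeta β →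
    ((kmap β)^[i] ((fun n => ! ω n), lref β x)).1
        = (fun n => ! ((kmap β)^[i] (ω, x)).1 n) ∧
    ((kmap β)^[i] ((fun n => ! ω n), lref β x)).2
        = lref β ((kmap β)^[i] (ω, x)).2 ∧
    ((kmap β)^[i] (ω, x)).2 ∈ Jbeta β := by
  intro i
  induction i with
  | zero => intro ω x hx; exact ⟨rfl, rfl, hx⟩
  | succ n ih =>
      intro ω x hx
      obtain ⟨h1, h2, h3⟩ := ih ω x hx
      set p := (kmap β)^[n] (ω, x) with hp
      have hpair : (kmap β)^[n] ((fun n => ! ω n), lref β x) =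
          ((fun m => ! p.1 m), lref β p.2) := by
        rw [Prod.ext_iff]; exact ⟨h1, h2⟩
      rw [Function.iterate_succ_apply', Function.iterate_succ_apply', hpair]
      have hk := kmap_symm hβ h3 p.1
      have hmem : (kmap β (p.1, p.2)).2 ∈ Jbeta β := rmap_mem hβ h3 p.1
      rw [show (p.1, p.2) = p from rfl] at hk hmem
      rw [hk]
      exact ⟨rfl, rfl, hmem⟩

end Aux

/-- symmetry of random digits: `d_i(ω,x) = ⌊β⌋ - d_i(ω̄, ℓ(x))`, where `ω̄`
is the bitwise complement of `ω` and `ℓ(x) = ⌊β⌋/(β-1) - x`. -/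
theorem digit_symmetry (β : ℝ) (hβ : 1 < β) (hni : ¬ ∃ n : ℤ, β = (n : ℝ)) :
    ∀ (ω : ℕ → Bool), ∀ x ∈ Jbeta β, ∀ i : ℕ,
      rdig β i ω x = ⌊β⌋ - rdig β i (fun n => ! ω n) (lref β x) := by
  intro ω x hx i
  obtain ⟨h1, h2, h3⟩ := iter_symm hβ i ω x hx
  unfold rdig
  rw [h1, h2]
  exact rdigit_symm hβ h3 _
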